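/- Let δ > 0 and let c, c₀, A, d be positive integers with c ≥ c₀ + log₂(A) + 1. Then there exist universal constants c₁, c₂ > 0 such that there is a ReLU network N : ℝ^d → ℝ of width at most d + 2, depth at most c₁ · c₀² · d, and all weights bounded in absolute value by c₂ · 2^c · A · d / δ, such that with probability at least 1 − δ over x drawn uniformly from [0,A]^d, the value N(x) is a natural number and for every i ∈ {1,…,d}: BIN_{(i−1)c+1 : ic}(N(x)) = ⌊(x_i/A) · 2^{c₀}⌋ · A. -/

import Mathlib

open scoped BigOperators

noncomputable section

/-- The ReLU activation function. -/
def relu (x : ℝ) : ℝ := max 0 x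

/-- One affine layer of a neural network: a weight matrix and a bias vector. -/
structure Layer (nin nout : ℕ) where
  W : Matrix (Fin nout) (Fin nin) ℝ
  b : Fin nout → ℝ

/-- The affine map computed by a layer. -/
def Layer.affine {nin nout : ℕ} (l : Layer nin nout) (x : Fin nin → ℝ) : Fin nout → ℝ :=
  fun i => (∑ j, l.W i j * x j) + l.b i

/-- A ReLU network: a nonempty sequence of affine layers; ReLU is applied after
every layer except the last one. -/
inductive Net : ℕ → ℕ → Type
  | last {nin nout : ℕ} : Layer nin nout → Net nin nout
  | cons {nin k nout : ℕ} : Layer nin k → Net k nout → Net nin nout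

namespace Net

/-- Evaluation of a ReLU network. -/
def eval : {nin nout : ℕ} → Net nin nout → (Fin nin → ℝ) → (Fin nout → ℝ)
  | _, _, .last l, x => l.affine x
  | _, _, .cons l rest, x => rest.eval (fun i => relu (l.affine x i))

/-- The depth (number of layers) of a network. -/
def depth : {nin nout : ℕ} → Net nin nout → ℕ
  | _, _, .last _ => 1
  | _, _, .cons _ rest => rest.depth + 1

/-- The width of a network: the maximum of the input dimension and all
intermediate layer dimensions. -/
def width : {nin nout : ℕ} → Net nin nout → ℕ
  | nin, _, .last _ => nin
  | nin, _, .cons _ rest => max nin rest.width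

/-- The number of parameters of a network: the total number of entries of all
weight matrices and bias vectors. -/
def params : {nin nout : ℕ} → Net nin nout → ℕ
  | nin, nout, .last _ => nout * nin + nout
  | nin, _, .cons (k := k) _ rest => (k * nin + k) + rest.params

/-- All weights (matrix entries and biases) of the network lie in the set `s`. -/
def weightsIn (s : Set ℝ) : {nin nout : ℕ} → Net nin nout → Prop
  | _, _, .last l => (∀ i j, l.W i j ∈ s) ∧ (∀ i, l.b i ∈ s)
  | _, _, .cons l rest => ((∀ i j, l.W i j ∈ s) ∧ (∀ i, l.b i ∈ s)) ∧ rest.weightsIn s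

/-- The bias vector of the output layer of a network. -/
def lastBias : {nin nout : ℕ} → Net nin nout → (Fin nout → ℝ)
  | _, _, .last l => l.b
  | _, _, .cons _ rest => rest.lastBias

end Net

/-- `BIN a b m` is the integer formed by bits `a` through `b` (1-indexed from the
least significant bit) of the binary representation of `m`. -/
def BIN (a b m : ℕ) : ℕ := (m / 2^(a-1)) % 2^(b - a + 1)

end

noncomputable section


lemma relu_of_nonneg {t : ℝ} (h : 0 ≤ t) : relu t = t := max_eq_right h

@[simp] lemma relu_zero : relu 0 = 0 := max_self 0

namespace BitNet

/-- append two nets; relu is applied between them -/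
def append : {a b e : ℕ} → Net a b → Net b e → Net a e
  | _, _, _, .last l, n2 => .cons l n2
  | _, _, _, .cons l r, n2 => .cons l (append r n2)

def evalR {a b : ℕ} (n : Net a b) (x : Fin a → ℝ) : Fin b → ℝ :=
  fun i => relu (n.eval x i)

lemma eval_append : ∀ {a b e : ℕ} (n1 : Net a b) (n2 : Net b e) (x : Fin a → ℝ),
    (append n1 n2).eval x = n2.eval (evalR n1 x)
  | _, _, _, .last l, n2, x => rfl
  | _, _, _, .cons l r, n2, x => by
      show (append r n2).eval _ = _
      rw [eval_append r n2]
      rfl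

lemma evalR_append {a b e : ℕ} (n1 : Net a b) (n2 : Net b e) (x : Fin a → ℝ) :
    evalR (append n1 n2) x = evalR n2 (evalR n1 x) := by
  unfold evalR; rw [eval_append]
  rfl

lemma depth_append : ∀ {a b e : ℕ} (n1 : Net a b) (n2 : Net b e),
    (append n1 n2).depth = n1.depth + n2.depth
  | _, _, _, .last l, n2 => by simp [append, Net.depth]; omega
  | _, _, _, .cons l r, n2 => by
      show (append r n2).depth + 1 = _
      rw [depth_append r n2]; simp [Net.depth]; omega

lemma width_append : ∀ {a b e : ℕ} (n1 : Net a b) (n2 : Net b e),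
    (append n1 n2).width = max n1.width n2.width
  | a, _, _, .last l, n2 => by simp [append, Net.width]
  | a, _, _, .cons l r, n2 => by
      show max a (append r n2).width = _
      rw [width_append r n2, Net.width, max_assoc]

lemma weightsIn_append : ∀ {a b e : ℕ} (n1 : Net a b) (n2 : Net b e) {s : Set ℝ},
    n1.weightsIn s → n2.weightsIn s → (append n1 n2).weightsIn s
  | _, _, _, .last l, n2, s, h1, h2 => ⟨h1, h2⟩
  | _, _, _, .cons l r, n2, s, h1, h2 => ⟨h1.1, weightsIn_append r n2 h1.2 h2⟩

/-- a row with one nonzero entry -/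
def eRow {n : ℕ} (a : Fin n) (w : ℝ) : Fin n → ℝ := fun j => if j = a then w else 0

/-- a row with two nonzero entries -/
def eRow2 {n : ℕ} (a b : Fin n) (w v : ℝ) : Fin n → ℝ :=
  fun j => if j = a then w else if j = b then v else 0

lemma sum_eRow {n : ℕ} (a : Fin n) (w : ℝ) (x : Fin n → ℝ) :
    ∑ j, eRow a w j * x j = w * x a := by
  simp [eRow, ite_mul]

lemma sum_eRow2 {n : ℕ} (a b : Fin n) (hab : a ≠ b) (w v : ℝ) (x : Fin n → ℝ) :
    ∑ j, eRow2 a b w v j * x j = w * x a + v * x b := by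
  have : ∀ j, eRow2 a b w v j = eRow a w j + eRow b v j := by
    intro j
    simp only [eRow2, eRow]
    split_ifs with h1 h2 <;> first | (subst h1; subst h2; exact absurd rfl hab) | ring
  simp only [this, add_mul, Finset.sum_add_distrib, sum_eRow]

section Layers

variable (d : ℕ) (A ε : ℝ)

/-- input embedding layer -/
def layer0 : Layer d (d + 2) where
  W := fun s => if h : (s : ℕ) < d then eRow ⟨(s : ℕ), h⟩ 1 else 0
  b := fun _ => 0

/-- compute p = relu(r - T), keeping x's, r, a -/
def layer1 (i : ℕ) (hi : i < d) (T : ℝ) : Layer (d + 2) (d + 2) where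
  W := fun s =>
    if (s : ℕ) < i then eRow s 1
    else if (s : ℕ) = i then eRow ⟨i, by omega⟩ 1
    else if (s : ℕ) = i + 1 then eRow ⟨i, by omega⟩ 1
    else if (s : ℕ) = i + 2 then eRow ⟨i + 1, by omega⟩ 1
    else 0
  b := fun s => if (s : ℕ) = i + 1 then -T else 0

/-- compute v = relu(A - (A/ε) p), keeping x's, r, a -/
def layer2 (i : ℕ) (hi : i < d) : Layer (d + 2) (d + 2) where
  W := fun s =>
    if (s : ℕ) < i then eRow s 1
    else if (s : ℕ) = i then eRow ⟨i, by omega⟩ 1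
    else if (s : ℕ) = i + 1 then eRow ⟨i + 1, by omega⟩ (-(A / ε))
    else if (s : ℕ) = i + 2 then eRow ⟨i + 2, by omega⟩ 1
    else 0
  b := fun s => if (s : ℕ) = i + 1 then A else 0

/-- compute r' = r - T + (T/A) v and a' = 2a + A - v -/
def layer3mid (i : ℕ) (hi : i < d) (T : ℝ) : Layer (d + 2) (d + 2) where
  W := fun s =>
    if (s : ℕ) < i then eRow s 1
    else if (s : ℕ) = i then eRow2 ⟨i, by omega⟩ ⟨i + 1, by omega⟩ 1 (T / A)
    else if (s : ℕ) = i + 1 then eRow2 ⟨i + 2, by omega⟩ ⟨i + 1, by omega⟩ 2 (-1)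
    else 0
  b := fun s => if (s : ℕ) = i then -T else if (s : ℕ) = i + 1 then A else 0

/-- compute a' = sh * (2a + A - v), dropping r -/
def layer3last (i : ℕ) (hi : i < d) (sh : ℝ) : Layer (d + 2) (d + 2) where
  W := fun s =>
    if (s : ℕ) < i then eRow s 1
    else if (s : ℕ) = i then eRow2 ⟨i + 2, by omega⟩ ⟨i + 1, by omega⟩ (2 * sh) (-sh)
    else 0
  b := fun s => if (s : ℕ) = i then sh * A else 0

/-- output layer: read slot 0 -/
def layerOut : Layer (d + 2) 1 where
  W := fun _ => eRow ⟨0, by omega⟩ 1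
  b := fun _ => 0

/-- state carrying x's below i, r at i, a at i+1 -/
def stateMid (xe : ℕ → ℝ) (i : ℕ) (r a : ℝ) : Fin (d + 2) → ℝ :=
  fun k => if (k : ℕ) < i then xe k else if (k : ℕ) = i then r
    else if (k : ℕ) = i + 1 then a else 0

/-- state carrying x's below i, w1 at i, w2 at i+1, w3 at i+2 -/
def state4 (xe : ℕ → ℝ) (i : ℕ) (w1 w2 w3 : ℝ) : Fin (d + 2) → ℝ :=
  fun k => if (k : ℕ) < i then xe k else if (k : ℕ) = i then w1
    else if (k : ℕ) = i + 1 then w2 else if (k : ℕ) = i + 2 then w3 else 0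

/-- state carrying x's below i, a at i -/
def statePost (xe : ℕ → ℝ) (i : ℕ) (a : ℝ) : Fin (d + 2) → ℝ :=
  fun k => if (k : ℕ) < i then xe k else if (k : ℕ) = i then a else 0

end Layers

end BitNet

namespace BitNet
section Layers
variable {d : ℕ}

lemma stateMid_lt {xe : ℕ → ℝ} {i : ℕ} {r a : ℝ} {s : Fin (d+2)} (h : (s:ℕ) < i) :
    stateMid d xe i r a s = xe s := if_pos h

lemma stateMid_eq {xe : ℕ → ℝ} {i : ℕ} {r a : ℝ} {s : Fin (d+2)} (h : (s:ℕ) = i) :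
    stateMid d xe i r a s = r := by
  simp only [stateMid]; rw [h, if_neg (lt_irrefl i), if_pos rfl]

lemma stateMid_eq1 {xe : ℕ → ℝ} {i : ℕ} {r a : ℝ} {s : Fin (d+2)} (h : (s:ℕ) = i + 1) :
    stateMid d xe i r a s = a := by
  simp only [stateMid]
  rw [h, if_neg (by omega), if_neg (by omega), if_pos rfl]

lemma stateMid_out {xe : ℕ → ℝ} {i : ℕ} {r a : ℝ} {s : Fin (d+2)} (h1 : ¬ (s:ℕ) < i)
    (h2 : ¬ (s:ℕ) = i) (h3 : ¬ (s:ℕ) = i + 1) :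
    stateMid d xe i r a s = 0 := by
  simp only [stateMid]; rw [if_neg h1, if_neg h2, if_neg h3]

lemma state4_lt {xe : ℕ → ℝ} {i : ℕ} {w1 w2 w3 : ℝ} {s : Fin (d+2)} (h : (s:ℕ) < i) :
    state4 d xe i w1 w2 w3 s = xe s := if_pos h

lemma state4_eq {xe : ℕ → ℝ} {i : ℕ} {w1 w2 w3 : ℝ} {s : Fin (d+2)} (h : (s:ℕ) = i) :
    state4 d xe i w1 w2 w3 s = w1 := by
  simp only [state4]; rw [h, if_neg (lt_irrefl i), if_pos rfl]

lemma state4_eq1 {xe : ℕ → ℝ} {i : ℕ} {w1 w2 w3 : ℝ} {s : Fin (d+2)} (h : (s:ℕ) = i + 1) :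
    state4 d xe i w1 w2 w3 s = w2 := by
  simp only [state4]
  rw [h, if_neg (by omega), if_neg (by omega), if_pos rfl]

lemma state4_eq2 {xe : ℕ → ℝ} {i : ℕ} {w1 w2 w3 : ℝ} {s : Fin (d+2)} (h : (s:ℕ) = i + 2) :
    state4 d xe i w1 w2 w3 s = w3 := by
  simp only [state4]
  rw [h, if_neg (by omega), if_neg (by omega), if_neg (by omega), if_pos rfl]

lemma state4_out {xe : ℕ → ℝ} {i : ℕ} {w1 w2 w3 : ℝ} {s : Fin (d+2)} (h1 : ¬ (s:ℕ) < i)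
    (h2 : ¬ (s:ℕ) = i) (h3 : ¬ (s:ℕ) = i + 1) (h4 : ¬ (s:ℕ) = i + 2) :
    state4 d xe i w1 w2 w3 s = 0 := by
  simp only [state4]; rw [if_neg h1, if_neg h2, if_neg h3, if_neg h4]

lemma statePost_lt {xe : ℕ → ℝ} {i : ℕ} {a : ℝ} {s : Fin (d+2)} (h : (s:ℕ) < i) :
    statePost d xe i a s = xe s := if_pos h

lemma statePost_eq {xe : ℕ → ℝ} {i : ℕ} {a : ℝ} {s : Fin (d+2)} (h : (s:ℕ) = i) :
    statePost d xe i a s = a := by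
  simp only [statePost]; rw [h, if_neg (lt_irrefl i), if_pos rfl]

lemma statePost_out {xe : ℕ → ℝ} {i : ℕ} {a : ℝ} {s : Fin (d+2)} (h1 : ¬ (s:ℕ) < i)
    (h2 : ¬ (s:ℕ) = i) : statePost d xe i a s = 0 := by
  simp only [statePost]; rw [if_neg h1, if_neg h2]

lemma sum_zeroRow {n : ℕ} (x : Fin n → ℝ) : ∑ j, (0 : Fin n → ℝ) j * x j = 0 := by simp

variable (d)

lemma affine_layer1 (xe : ℕ → ℝ) (i : ℕ) (hi : i < d) (T r a : ℝ) :
    (layer1 d i hi T).affine (stateMid d xe i r a) = state4 d xe i r (r - T) a := by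
  funext s
  simp only [Layer.affine]
  by_cases h1 : (s : ℕ) < i
  · have hW : (layer1 d i hi T).W s = eRow s 1 := by simp only [layer1]; rw [if_pos h1]
    have hb : (layer1 d i hi T).b s = 0 := by
      simp only [layer1]; rw [if_neg (by omega : ¬ (s:ℕ) = i + 1)]
    rw [hW, hb, sum_eRow, stateMid_lt h1, state4_lt h1]; ring
  · by_cases h2 : (s : ℕ) = i
    · have hW : (layer1 d i hi T).W s = eRow ⟨i, by omega⟩ 1 := by
        simp only [layer1]; rw [if_neg h1, if_pos h2]
      have hb : (layer1 d i hi T).b s = 0 := by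
        simp only [layer1]; rw [if_neg (by omega : ¬ (s:ℕ) = i + 1)]
      rw [hW, hb, sum_eRow, stateMid_eq (s := ⟨i, by omega⟩) rfl, state4_eq h2]; ring
    · by_cases h3 : (s : ℕ) = i + 1
      · have hW : (layer1 d i hi T).W s = eRow ⟨i, by omega⟩ 1 := by
          simp only [layer1]; rw [if_neg h1, if_neg h2, if_pos h3]
        have hb : (layer1 d i hi T).b s = -T := by
          simp only [layer1]; rw [if_pos h3]
        rw [hW, hb, sum_eRow, stateMid_eq (s := ⟨i, by omega⟩) rfl, state4_eq1 h3]; ring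
      · by_cases h4 : (s : ℕ) = i + 2
        · have hW : (layer1 d i hi T).W s = eRow ⟨i + 1, by omega⟩ 1 := by
            simp only [layer1]; rw [if_neg h1, if_neg h2, if_neg h3, if_pos h4]
          have hb : (layer1 d i hi T).b s = 0 := by
            simp only [layer1]; rw [if_neg h3]
          rw [hW, hb, sum_eRow, stateMid_eq1 (s := ⟨i + 1, by omega⟩) rfl, state4_eq2 h4]; ring
        · have hW : (layer1 d i hi T).W s = 0 := by
            simp only [layer1]; rw [if_neg h1, if_neg h2, if_neg h3, if_neg h4]
          have hb : (layer1 d i hi T).b s = 0 := by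
            simp only [layer1]; rw [if_neg h3]
          rw [hW, hb, sum_zeroRow, state4_out h1 h2 h3 h4]; ring
end Layers
end BitNet

namespace BitNet
section Layers
variable (d : ℕ)

lemma affine_layer2 (A ε : ℝ) (xe : ℕ → ℝ) (i : ℕ) (hi : i < d) (r p a : ℝ) :
    (layer2 d A ε i hi).affine (state4 d xe i r p a)
      = state4 d xe i r (A - (A / ε) * p) a := by
  funext s
  simp only [Layer.affine]
  by_cases h1 : (s : ℕ) < i
  · have hW : (layer2 d A ε i hi).W s = eRow s 1 := by simp only [layer2]; rw [if_pos h1]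
    have hb : (layer2 d A ε i hi).b s = 0 := by
      simp only [layer2]; rw [if_neg (by omega : ¬ (s:ℕ) = i + 1)]
    rw [hW, hb, sum_eRow, state4_lt h1, state4_lt h1]; ring
  · by_cases h2 : (s : ℕ) = i
    · have hW : (layer2 d A ε i hi).W s = eRow ⟨i, by omega⟩ 1 := by
        simp only [layer2]; rw [if_neg h1, if_pos h2]
      have hb : (layer2 d A ε i hi).b s = 0 := by
        simp only [layer2]; rw [if_neg (by omega : ¬ (s:ℕ) = i + 1)]
      rw [hW, hb, sum_eRow, state4_eq (s := ⟨i, by omega⟩) rfl, state4_eq h2]; ring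
    · by_cases h3 : (s : ℕ) = i + 1
      · have hW : (layer2 d A ε i hi).W s = eRow ⟨i + 1, by omega⟩ (-(A / ε)) := by
          simp only [layer2]; rw [if_neg h1, if_neg h2, if_pos h3]
        have hb : (layer2 d A ε i hi).b s = A := by
          simp only [layer2]; rw [if_pos h3]
        rw [hW, hb, sum_eRow, state4_eq1 (s := ⟨i + 1, by omega⟩) rfl, state4_eq1 h3]; ring
      · by_cases h4 : (s : ℕ) = i + 2
        · have hW : (layer2 d A ε i hi).W s = eRow ⟨i + 2, by omega⟩ 1 := by
            simp only [layer2]; rw [if_neg h1, if_neg h2, if_neg h3, if_pos h4]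
          have hb : (layer2 d A ε i hi).b s = 0 := by
            simp only [layer2]; rw [if_neg h3]
          rw [hW, hb, sum_eRow, state4_eq2 (s := ⟨i + 2, by omega⟩) rfl, state4_eq2 h4]; ring
        · have hW : (layer2 d A ε i hi).W s = 0 := by
            simp only [layer2]; rw [if_neg h1, if_neg h2, if_neg h3, if_neg h4]
          have hb : (layer2 d A ε i hi).b s = 0 := by
            simp only [layer2]; rw [if_neg h3]
          rw [hW, hb, sum_zeroRow, state4_out h1 h2 h3 h4]; ring

lemma affine_layer3mid (A : ℝ) (xe : ℕ → ℝ) (i : ℕ) (hi : i < d) (T r v a : ℝ) :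
    (layer3mid d A i hi T).affine (state4 d xe i r v a)
      = stateMid d xe i (r - T + (T / A) * v) (2 * a + A - v) := by
  funext s
  simp only [Layer.affine]
  by_cases h1 : (s : ℕ) < i
  · have hW : (layer3mid d A i hi T).W s = eRow s 1 := by
      simp only [layer3mid]; rw [if_pos h1]
    have hb : (layer3mid d A i hi T).b s = 0 := by
      simp only [layer3mid]
      rw [if_neg (by omega : ¬ (s:ℕ) = i), if_neg (by omega : ¬ (s:ℕ) = i + 1)]
    rw [hW, hb, sum_eRow, state4_lt h1, stateMid_lt h1]; ring
  · by_cases h2 : (s : ℕ) = i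
    · have hW : (layer3mid d A i hi T).W s
          = eRow2 ⟨i, by omega⟩ ⟨i + 1, by omega⟩ 1 (T / A) := by
        simp only [layer3mid]; rw [if_neg h1, if_pos h2]
      have hb : (layer3mid d A i hi T).b s = -T := by
        simp only [layer3mid]; rw [if_pos h2]
      rw [hW, hb, sum_eRow2 _ _ (Fin.ne_of_val_ne (by norm_num)),
        state4_eq (s := ⟨i, by omega⟩) rfl, state4_eq1 (s := ⟨i + 1, by omega⟩) rfl,
        stateMid_eq h2]
      ring
    · by_cases h3 : (s : ℕ) = i + 1
      · have hW : (layer3mid d A i hi T).W s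
            = eRow2 ⟨i + 2, by omega⟩ ⟨i + 1, by omega⟩ 2 (-1) := by
          simp only [layer3mid]; rw [if_neg h1, if_neg h2, if_pos h3]
        have hb : (layer3mid d A i hi T).b s = A := by
          simp only [layer3mid]; rw [if_neg h2, if_pos h3]
        rw [hW, hb, sum_eRow2 _ _ (Fin.ne_of_val_ne (by norm_num)),
          state4_eq2 (s := ⟨i + 2, by omega⟩) rfl, state4_eq1 (s := ⟨i + 1, by omega⟩) rfl,
          stateMid_eq1 h3]
        ring
      · have hW : (layer3mid d A i hi T).W s = 0 := by
          simp only [layer3mid]; rw [if_neg h1, if_neg h2, if_neg h3]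
        have hb : (layer3mid d A i hi T).b s = 0 := by
          simp only [layer3mid]; rw [if_neg h2, if_neg h3]
        rw [hW, hb, sum_zeroRow, stateMid_out h1 h2 h3]; ring

lemma affine_layer3last (A : ℝ) (xe : ℕ → ℝ) (i : ℕ) (hi : i < d) (sh r v a : ℝ) :
    (layer3last d A i hi sh).affine (state4 d xe i r v a)
      = statePost d xe i (sh * (2 * a + A - v)) := by
  funext s
  simp only [Layer.affine]
  by_cases h1 : (s : ℕ) < i
  · have hW : (layer3last d A i hi sh).W s = eRow s 1 := by
      simp only [layer3last]; rw [if_pos h1]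
    have hb : (layer3last d A i hi sh).b s = 0 := by
      simp only [layer3last]; rw [if_neg (by omega : ¬ (s:ℕ) = i)]
    rw [hW, hb, sum_eRow, state4_lt h1, statePost_lt h1]; ring
  · by_cases h2 : (s : ℕ) = i
    · have hW : (layer3last d A i hi sh).W s
          = eRow2 ⟨i + 2, by omega⟩ ⟨i + 1, by omega⟩ (2 * sh) (-sh) := by
        simp only [layer3last]; rw [if_neg h1, if_pos h2]
      have hb : (layer3last d A i hi sh).b s = sh * A := by
        simp only [layer3last]; rw [if_pos h2]
      rw [hW, hb, sum_eRow2 _ _ (Fin.ne_of_val_ne (by norm_num)),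
        state4_eq2 (s := ⟨i + 2, by omega⟩) rfl, state4_eq1 (s := ⟨i + 1, by omega⟩) rfl,
        statePost_eq h2]
      ring
    · have hW : (layer3last d A i hi sh).W s = 0 := by
        simp only [layer3last]; rw [if_neg h1, if_neg h2]
      have hb : (layer3last d A i hi sh).b s = 0 := by
        simp only [layer3last]; rw [if_neg h2]
      rw [hW, hb, sum_zeroRow, statePost_out h1 h2]; ring

lemma affine_layer0 (x : Fin d → ℝ) (xe : ℕ → ℝ) (hxe : ∀ k : Fin d, xe k = x k) :
    (layer0 d).affine x = statePost d xe d 0 := by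
  funext s
  simp only [Layer.affine]
  by_cases h1 : (s : ℕ) < d
  · have hW : (layer0 d).W s = eRow ⟨(s:ℕ), h1⟩ 1 := by
      simp only [layer0]; rw [dif_pos h1]
    have hb : (layer0 d).b s = 0 := rfl
    rw [hW, hb, sum_eRow, statePost_lt h1, ← hxe ⟨(s:ℕ), h1⟩]; ring
  · have hW : (layer0 d).W s = 0 := by
      simp only [layer0]; rw [dif_neg h1]
    have hb : (layer0 d).b s = 0 := rfl
    rw [hW, hb, sum_zeroRow]
    by_cases h3 : (s:ℕ) = d
    · rw [statePost_eq h3]; ring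
    · rw [statePost_out h1 h3]; ring

lemma affine_layerOut (z : Fin (d + 2) → ℝ) :
    (layerOut d).affine z = fun _ => z ⟨0, by omega⟩ := by
  funext s
  simp only [Layer.affine, layerOut]
  rw [sum_eRow]
  ring

end Layers
end BitNet

namespace BitNet

lemma relu_of_nonpos {t : ℝ} (h : t ≤ 0) : relu t = 0 := max_eq_left h

section Blocks
variable (d : ℕ) (A ε : ℝ)

def bitBlockMid (i : ℕ) (hi : i < d) (T : ℝ) : Net (d + 2) (d + 2) :=
  .cons (layer1 d i hi T) (.cons (layer2 d A ε i hi) (.last (layer3mid d A i hi T)))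

def bitBlockLast (i : ℕ) (hi : i < d) (T sh : ℝ) : Net (d + 2) (d + 2) :=
  .cons (layer1 d i hi T) (.cons (layer2 d A ε i hi) (.last (layer3last d A i hi sh)))

variable {d A ε}

lemma relu_stateMid' (xe : ℕ → ℝ) (i : ℕ) (r a : ℝ) (hxe : ∀ m, 0 ≤ xe m) :
    (fun k => relu (stateMid d xe i r a k)) = stateMid d xe i (relu r) (relu a) := by
  funext k
  simp only [stateMid]
  split_ifs
  · exact relu_of_nonneg (hxe _)
  · rfl
  · rfl
  · exact relu_zero

lemma relu_state4' (xe : ℕ → ℝ) (i : ℕ) (w1 w2 w3 : ℝ) (hxe : ∀ m, 0 ≤ xe m) :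
    (fun k => relu (state4 d xe i w1 w2 w3 k))
      = state4 d xe i (relu w1) (relu w2) (relu w3) := by
  funext k
  simp only [state4]
  split_ifs
  · exact relu_of_nonneg (hxe _)
  · rfl
  · rfl
  · rfl
  · exact relu_zero

lemma relu_statePost' (xe : ℕ → ℝ) (i : ℕ) (a : ℝ) (hxe : ∀ m, 0 ≤ xe m) :
    (fun k => relu (statePost d xe i a k)) = statePost d xe i (relu a) := by
  funext k
  simp only [statePost]
  split_ifs
  · exact relu_of_nonneg (hxe _)
  · rfl
  · exact relu_zero

lemma eval_bitBlockMid (xe : ℕ → ℝ) (i : ℕ) (hi : i < d) (T r a : ℝ)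
    (hxe : ∀ m, 0 ≤ xe m) (hA : 0 < A) (hε : 0 < ε) (hr : 0 ≤ r) (ha : 0 ≤ a)
    (hT : 0 ≤ T) (hcase : r ≤ T ∨ T + ε ≤ r) :
    (bitBlockMid d A ε i hi T).eval (stateMid d xe i r a)
      = if r ≤ T then stateMid d xe i r (2 * a) else stateMid d xe i (r - T) (2 * a + A) := by
  have e1 : (bitBlockMid d A ε i hi T).eval (stateMid d xe i r a)
      = (layer3mid d A i hi T).affine (fun k => relu ((layer2 d A ε i hi).affine
          (fun k' => relu ((layer1 d i hi T).affine (stateMid d xe i r a) k')) k)) := rfl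
  rw [e1, affine_layer1 d xe i hi T r a, relu_state4' xe i _ _ _ hxe,
    relu_of_nonneg hr, relu_of_nonneg ha]
  rcases hcase with hlo | hhi
  · have h2 : relu (r - T) = 0 := relu_of_nonpos (by linarith)
    rw [h2, affine_layer2 d A ε xe i hi r 0 a, relu_state4' xe i _ _ _ hxe,
      relu_of_nonneg hr, relu_of_nonneg ha]
    have h3 : relu (A - A / ε * 0) = A := by
      rw [mul_zero, sub_zero]; exact relu_of_nonneg (le_of_lt hA)
    rw [h3, affine_layer3mid d A xe i hi T r A a]
    have h4 : r - T + T / A * A = r := by field_simp; ring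
    have h5 : 2 * a + A - A = 2 * a := by ring
    rw [h4, h5, if_pos hlo]
  · have hεr : ε ≤ r - T := by linarith
    have h2 : relu (r - T) = r - T := relu_of_nonneg (by linarith)
    rw [h2, affine_layer2 d A ε xe i hi r (r - T) a, relu_state4' xe i _ _ _ hxe,
      relu_of_nonneg hr, relu_of_nonneg ha]
    have h3 : relu (A - A / ε * (r - T)) = 0 := by
      apply relu_of_nonpos
      have : A = A / ε * ε := by field_simp
      nlinarith [div_nonneg hA.le hε.le]
    rw [h3, affine_layer3mid d A xe i hi T r 0 a]
    have h4 : 2 * a + A - 0 = 2 * a + A := by ring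
    have h5 : r - T + T / A * 0 = r - T := by ring
    rw [h4, h5, if_neg (by linarith)]

lemma eval_bitBlockLast (xe : ℕ → ℝ) (i : ℕ) (hi : i < d) (T sh r a : ℝ)
    (hxe : ∀ m, 0 ≤ xe m) (hA : 0 < A) (hε : 0 < ε) (hr : 0 ≤ r) (ha : 0 ≤ a)
    (hT : 0 ≤ T) (hcase : r ≤ T ∨ T + ε ≤ r) :
    (bitBlockLast d A ε i hi T sh).eval (stateMid d xe i r a)
      = if r ≤ T then statePost d xe i (sh * (2 * a))
        else statePost d xe i (sh * (2 * a + A)) := by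
  have e1 : (bitBlockLast d A ε i hi T sh).eval (stateMid d xe i r a)
      = (layer3last d A i hi sh).affine (fun k => relu ((layer2 d A ε i hi).affine
          (fun k' => relu ((layer1 d i hi T).affine (stateMid d xe i r a) k')) k)) := rfl
  rw [e1, affine_layer1 d xe i hi T r a, relu_state4' xe i _ _ _ hxe,
    relu_of_nonneg hr, relu_of_nonneg ha]
  rcases hcase with hlo | hhi
  · have h2 : relu (r - T) = 0 := relu_of_nonpos (by linarith)
    rw [h2, affine_layer2 d A ε xe i hi r 0 a, relu_state4' xe i _ _ _ hxe,
      relu_of_nonneg hr, relu_of_nonneg ha]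
    have h3 : relu (A - A / ε * 0) = A := by
      rw [mul_zero, sub_zero]; exact relu_of_nonneg (le_of_lt hA)
    rw [h3, affine_layer3last d A xe i hi sh r A a]
    have h5 : 2 * a + A - A = 2 * a := by ring
    rw [h5, if_pos hlo]
  · have h2 : relu (r - T) = r - T := relu_of_nonneg (by linarith)
    rw [h2, affine_layer2 d A ε xe i hi r (r - T) a, relu_state4' xe i _ _ _ hxe,
      relu_of_nonneg hr, relu_of_nonneg ha]
    have h3 : relu (A - A / ε * (r - T)) = 0 := by
      apply relu_of_nonpos
      have : A = A / ε * ε := by field_simp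
      nlinarith [div_nonneg hA.le hε.le]
    rw [h3, affine_layer3last d A xe i hi sh r 0 a]
    have h4 : 2 * a + A - 0 = 2 * a + A := by ring
    rw [h4, if_neg (by linarith)]

end Blocks
end BitNet

namespace BitNet
section Chain
variable (d : ℕ) (A ε : ℝ)

/-- process bits c₀-n, ..., c₀ of the current coordinate;
the last bit comes with a final shift `sh`. -/
def chainAux (c₀ : ℕ) (i : ℕ) (hi : i < d) (sh : ℝ) : ℕ → Net (d + 2) (d + 2)
  | 0 => bitBlockLast d A ε i hi (A / 2 ^ c₀) sh
  | n + 1 => append (bitBlockMid d A ε i hi (A / 2 ^ (c₀ - (n + 1)))) (chainAux c₀ i hi sh n)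

variable {d A ε}

set_option maxHeartbeats 1000000 in
lemma eval_chainAux (c₀ : ℕ) (i : ℕ) (hi : i < d) (sh : ℝ) (xe : ℕ → ℝ) (k : ℕ)
    (hxe : ∀ m, 0 ≤ xe m) (hA : 0 < A) (hε : 0 < ε) (hsh : 0 ≤ sh)
    (hxlo : (k : ℝ) * (A / 2 ^ c₀) + ε ≤ xe i)
    (hxhi : xe i < ((k : ℝ) + 1) * (A / 2 ^ c₀)) :
    ∀ n, n < c₀ → ∀ a : ℝ, 0 ≤ a →
    evalR (chainAux d A ε c₀ i hi sh n)
      (stateMid d xe i (xe i - (A / 2 ^ c₀) * ((k : ℝ) - ((k % 2 ^ (n + 1) : ℕ) : ℝ))) a)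
    = statePost d xe i (sh * (2 ^ (n + 1) * a + A * ((k % 2 ^ (n + 1) : ℕ) : ℝ))) := by
  have hh : (0:ℝ) < A / 2 ^ c₀ := by positivity
  set h : ℝ := A / 2 ^ c₀ with hhdef
  intro n
  induction n with
  | zero =>
    intro _ a ha
    have hr0 : 0 ≤ xe i - h * ((k : ℝ) - ((k % 2 ^ 1 : ℕ) : ℝ)) := by
      have h1 : ((k % 2 ^ 1 : ℕ) : ℝ) ≤ (k : ℝ) := Nat.cast_le.mpr (Nat.mod_le k _)
      have h2 : (0:ℝ) ≤ ((k % 2 ^ 1 : ℕ) : ℝ) := Nat.cast_nonneg _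
      nlinarith [hε.le]
    show evalR (bitBlockLast d A ε i hi h sh) _ = _
    unfold evalR
    rw [eval_bitBlockLast xe i hi h sh _ a hxe hA hε hr0 ha hh.le ?hcase]
    case hcase =>
      rcases Nat.mod_two_eq_zero_or_one k with hb | hb
      · left; rw [pow_one, hb]; push_cast; nlinarith
      · right; rw [pow_one, hb]; push_cast; nlinarith
    rcases Nat.mod_two_eq_zero_or_one k with hb | hb
    · rw [if_pos (by rw [pow_one, hb]; push_cast; nlinarith)]
      rw [relu_statePost' xe i _ hxe,
        relu_of_nonneg (mul_nonneg hsh (by linarith : (0:ℝ) ≤ 2 * a))]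
      congr 1
      norm_num [hb]
    · rw [if_neg (not_le.mpr (by rw [pow_one, hb]; push_cast; nlinarith))]
      rw [relu_statePost' xe i _ hxe,
        relu_of_nonneg (mul_nonneg hsh (by linarith [hA.le] : (0:ℝ) ≤ 2 * a + A))]
      congr 1
      norm_num [hb]
  | succ n IH =>
    intro hn a ha
    have hn' : n < c₀ := by omega
    have hp2 : (2:ℝ) ^ (c₀ - (n+1)) * 2 ^ (n+1) = 2 ^ c₀ := by
      rw [← pow_add]; congr 1; omega
    have hT : A / 2 ^ (c₀ - (n + 1)) = h * 2 ^ (n + 1) := by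
      rw [hhdef, div_mul_eq_mul_div]
      rw [div_eq_div_iff (by positivity) (by positivity)]
      rw [mul_assoc, mul_comm ((2:ℝ) ^ (n+1)), hp2]
    have hmod : k % 2 ^ (n + 2) = k % 2 ^ (n + 1) + 2 ^ (n + 1) * (k / 2 ^ (n + 1) % 2) := by
      rw [pow_succ]; exact Nat.mod_mul
    have hmlt : ((k % 2 ^ (n+1) : ℕ) : ℝ) + 1 ≤ 2 ^ (n+1) := by
      exact_mod_cast Nat.succ_le_of_lt (Nat.mod_lt _ (by positivity))
    have hcnn : (0:ℝ) ≤ ((k % 2 ^ (n + 1) : ℕ) : ℝ) := Nat.cast_nonneg _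
    have hr0 : 0 ≤ xe i - h * ((k : ℝ) - ((k % 2 ^ (n + 2) : ℕ) : ℝ)) := by
      have h1 : ((k % 2 ^ (n + 2) : ℕ) : ℝ) ≤ (k : ℝ) := Nat.cast_le.mpr (Nat.mod_le k _)
      have h2 : (0:ℝ) ≤ ((k % 2 ^ (n + 2) : ℕ) : ℝ) := Nat.cast_nonneg _
      nlinarith [hε.le]
    have hr0' : 0 ≤ xe i - h * ((k : ℝ) - ((k % 2 ^ (n + 1) : ℕ) : ℝ)) := by
      have h1 : ((k % 2 ^ (n + 1) : ℕ) : ℝ) ≤ (k : ℝ) := Nat.cast_le.mpr (Nat.mod_le k _)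
      nlinarith [hε.le]
    show evalR (append (bitBlockMid d A ε i hi (A / 2 ^ (c₀ - (n + 1)))) _) _ = _
    rw [evalR_append]
    have hstep : evalR (bitBlockMid d A ε i hi (A / 2 ^ (c₀ - (n + 1))))
        (stateMid d xe i (xe i - h * ((k : ℝ) - ((k % 2 ^ (n + 2) : ℕ) : ℝ))) a)
        = stateMid d xe i
            (xe i - h * ((k : ℝ) - ((k % 2 ^ (n + 1) : ℕ) : ℝ)))
            (2 * a + A * ((k / 2 ^ (n + 1) % 2 : ℕ) : ℝ)) := by
      unfold evalR
      rw [eval_bitBlockMid xe i hi _ _ a hxe hA hε hr0 ha (by rw [hT]; positivity) ?hc]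
      case hc =>
        rcases Nat.mod_two_eq_zero_or_one (k / 2 ^ (n + 1)) with hb | hb
        · left; rw [hT, hmod, hb]; push_cast; nlinarith
        · right; rw [hT, hmod, hb]; push_cast; nlinarith
      rcases Nat.mod_two_eq_zero_or_one (k / 2 ^ (n + 1)) with hb | hb
      · rw [if_pos (by rw [hT, hmod, hb]; push_cast; nlinarith)]
        rw [relu_stateMid' xe i _ _ hxe, relu_of_nonneg hr0,
          relu_of_nonneg (by linarith : (0:ℝ) ≤ 2 * a)]
        have e1 : xe i - h * ((k:ℝ) - ((k % 2 ^ (n + 2) : ℕ) : ℝ))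
            = xe i - h * ((k:ℝ) - ((k % 2 ^ (n + 1) : ℕ) : ℝ)) := by
          rw [hmod, hb]; push_cast; ring
        rw [e1]
        congr 1
        rw [hb]; push_cast; ring
      · rw [if_neg (not_le.mpr (by rw [hT, hmod, hb]; push_cast; nlinarith))]
        have hrT : 0 ≤ xe i - h * ((k:ℝ) - ((k % 2 ^ (n + 2) : ℕ) : ℝ))
            - A / 2 ^ (c₀ - (n + 1)) := by
          rw [hT, hmod, hb]; push_cast; nlinarith
        rw [relu_stateMid' xe i _ _ hxe, relu_of_nonneg hrT,
          relu_of_nonneg (by linarith [hA.le] : (0:ℝ) ≤ 2 * a + A)]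
        have e1 : xe i - h * ((k:ℝ) - ((k % 2 ^ (n + 2) : ℕ) : ℝ)) - A / 2 ^ (c₀ - (n + 1))
            = xe i - h * ((k:ℝ) - ((k % 2 ^ (n + 1) : ℕ) : ℝ)) := by
          rw [hT, hmod, hb]; push_cast; ring
        have e2 : (2:ℝ) * a + A = 2 * a + A * ((k / 2 ^ (n + 1) % 2 : ℕ) : ℝ) := by
          rw [hb]; push_cast; ring
        rw [e1, e2]
    rw [hstep]
    have hanew : (0:ℝ) ≤ 2 * a + A * ((k / 2 ^ (n + 1) % 2 : ℕ) : ℝ) := by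
      have := mul_nonneg hA.le (Nat.cast_nonneg (k / 2 ^ (n + 1) % 2))
      linarith
    rw [IH hn' _ hanew]
    congr 1
    rw [hmod]
    push_cast
    ring

end Chain
end BitNet

namespace BitNet
section Coords
variable (d : ℕ) (A ε : ℝ)

/-- process coordinates i, i-1, ..., 0 -/
def coordChain (c₀ : ℕ) (shv : ℝ) : (i : ℕ) → i < d → Net (d + 2) (d + 2)
  | 0, h => chainAux d A ε c₀ 0 h 1 (c₀ - 1)
  | i + 1, h => append (chainAux d A ε c₀ (i + 1) h shv (c₀ - 1))
      (coordChain c₀ shv i (by omega))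

def fullNet (c₀ : ℕ) (shv : ℝ) (hd : 0 < d) : Net d 1 :=
  .cons (layer0 d)
    (append (coordChain d A ε c₀ shv (d - 1) (by omega)) (.last (layerOut d)))

/-- the accumulator recursion -/
def acc (c₀ : ℕ) (shv : ℝ) (kf : ℕ → ℕ) : ℕ → ℝ → ℝ
  | 0, a => 2 ^ c₀ * a + A * (kf 0 : ℝ)
  | i + 1, a => acc c₀ shv kf i (shv * (2 ^ c₀ * a + A * (kf (i + 1) : ℝ)))

variable {d A ε}

lemma statePost_eq_stateMid (xe : ℕ → ℝ) (i : ℕ) (a : ℝ) :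
    statePost d xe (i + 1) a = stateMid d xe i (xe i) a := by
  funext s
  simp only [statePost, stateMid]
  rcases lt_trichotomy ((s : ℕ)) i with h | h | h
  · rw [if_pos (by omega), if_pos h]
  · rw [if_pos (by omega), if_neg (by omega), if_pos h, h]
  · by_cases h2 : (s : ℕ) = i + 1
    · rw [if_neg (show ¬ (s:ℕ) < i + 1 by omega), if_pos h2,
        if_neg (show ¬ (s:ℕ) < i by omega), if_neg (show ¬ (s:ℕ) = i by omega)]
    · rw [if_neg (show ¬ (s:ℕ) < i + 1 by omega), if_neg h2,
        if_neg (show ¬ (s:ℕ) < i by omega), if_neg (show ¬ (s:ℕ) = i by omega)]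

lemma acc_nonneg (c₀ : ℕ) (shv : ℝ) (kf : ℕ → ℕ) (hA : 0 ≤ A) (hshv : 0 ≤ shv) :
    ∀ i a, 0 ≤ a → 0 ≤ acc A c₀ shv kf i a := by
  intro i
  induction i with
  | zero =>
    intro a ha
    have := mul_nonneg hA (Nat.cast_nonneg (kf 0))
    simp only [acc]
    positivity
  | succ i IH =>
    intro a ha
    apply IH
    have := mul_nonneg hA (Nat.cast_nonneg (kf (i + 1)))
    positivity

lemma eval_coordOnce (c₀ : ℕ) (hc₀ : 0 < c₀) (i : ℕ) (hi : i < d) (sh : ℝ) (xe : ℕ → ℝ)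
    (k : ℕ) (hxe : ∀ m, 0 ≤ xe m) (hA : 0 < A) (hε : 0 < ε) (hsh : 0 ≤ sh)
    (hk : k < 2 ^ c₀)
    (hxlo : (k : ℝ) * (A / 2 ^ c₀) + ε ≤ xe i)
    (hxhi : xe i < ((k : ℝ) + 1) * (A / 2 ^ c₀)) (a : ℝ) (ha : 0 ≤ a) :
    evalR (chainAux d A ε c₀ i hi sh (c₀ - 1)) (statePost d xe (i + 1) a)
      = statePost d xe i (sh * (2 ^ c₀ * a + A * (k : ℝ))) := by
  have hcc : c₀ - 1 + 1 = c₀ := by omega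
  have hkk : k % 2 ^ (c₀ - 1 + 1) = k := by rw [hcc]; exact Nat.mod_eq_of_lt hk
  have hstate : statePost d xe (i + 1) a
      = stateMid d xe i
          (xe i - (A / 2 ^ c₀) * ((k : ℝ) - ((k % 2 ^ (c₀ - 1 + 1) : ℕ) : ℝ))) a := by
    rw [hkk, sub_self, mul_zero, sub_zero]
    exact statePost_eq_stateMid xe i a
  rw [hstate,
    eval_chainAux c₀ i hi sh xe k hxe hA hε hsh hxlo hxhi (c₀ - 1) (by omega) a ha,
    hkk, hcc]

lemma eval_coordChain (c₀ : ℕ) (hc₀ : 0 < c₀) (shv : ℝ) (xe : ℕ → ℝ) (kf : ℕ → ℕ)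
    (hxe : ∀ m, 0 ≤ xe m) (hA : 0 < A) (hε : 0 < ε) (hshv : 0 ≤ shv) :
    ∀ i, ∀ hi : i < d,
    (∀ l, l ≤ i → kf l < 2 ^ c₀) →
    (∀ l, l ≤ i → (kf l : ℝ) * (A / 2 ^ c₀) + ε ≤ xe l) →
    (∀ l, l ≤ i → xe l < ((kf l : ℝ) + 1) * (A / 2 ^ c₀)) →
    ∀ a, 0 ≤ a →
    evalR (coordChain d A ε c₀ shv i hi) (statePost d xe (i + 1) a)
      = statePost d xe 0 (acc A c₀ shv kf i a) := by
  intro i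
  induction i with
  | zero =>
    intro hi hk hlo hhi a ha
    show evalR (chainAux d A ε c₀ 0 hi 1 (c₀ - 1)) _ = _
    rw [eval_coordOnce c₀ hc₀ 0 hi 1 xe (kf 0) hxe hA hε zero_le_one (hk 0 le_rfl)
      (hlo 0 le_rfl) (hhi 0 le_rfl) a ha]
    simp only [acc, one_mul]
  | succ i IH =>
    intro hi hk hlo hhi a ha
    show evalR (append (chainAux d A ε c₀ (i + 1) hi shv (c₀ - 1)) _) _ = _
    rw [evalR_append,
      eval_coordOnce c₀ hc₀ (i + 1) hi shv xe (kf (i + 1)) hxe hA hε hshv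
        (hk (i + 1) le_rfl) (hlo (i + 1) le_rfl) (hhi (i + 1) le_rfl) a ha]
    have hnn : 0 ≤ shv * (2 ^ c₀ * a + A * (kf (i + 1) : ℝ)) := by
      have := mul_nonneg hA.le (Nat.cast_nonneg (kf (i + 1)))
      positivity
    rw [IH (by omega) (fun l hl => hk l (by omega)) (fun l hl => hlo l (by omega))
      (fun l hl => hhi l (by omega)) _ hnn]
    rfl

lemma eval_fullNet (c₀ : ℕ) (hc₀ : 0 < c₀) (shv : ℝ) (hd : 0 < d) (x : Fin d → ℝ)
    (xe : ℕ → ℝ) (hxe0 : ∀ k : Fin d, xe k = x k) (kf : ℕ → ℕ)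
    (hxe : ∀ m, 0 ≤ xe m) (hA : 0 < A) (hε : 0 < ε) (hshv : 0 ≤ shv)
    (hk : ∀ l, l ≤ d - 1 → kf l < 2 ^ c₀)
    (hlo : ∀ l, l ≤ d - 1 → (kf l : ℝ) * (A / 2 ^ c₀) + ε ≤ xe l)
    (hhi : ∀ l, l ≤ d - 1 → xe l < ((kf l : ℝ) + 1) * (A / 2 ^ c₀)) :
    (fullNet d A ε c₀ shv hd).eval x 0 = acc A c₀ shv kf (d - 1) 0 := by
  have e1 : (fullNet d A ε c₀ shv hd).eval x
      = (append (coordChain d A ε c₀ shv (d - 1) (by omega)) (.last (layerOut d))).eval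
          (fun k => relu ((layer0 d).affine x k)) := rfl
  rw [e1, affine_layer0 d x xe hxe0, relu_statePost' xe d 0 hxe, relu_zero, eval_append]
  have ed : d = d - 1 + 1 := by omega
  have e2 : statePost d xe d (0:ℝ) = statePost d xe (d - 1 + 1) 0 := by rw [← ed]
  rw [e2, eval_coordChain c₀ hc₀ shv xe kf hxe hA hε hshv (d - 1) (by omega) hk hlo hhi 0
    le_rfl]
  show (layerOut d).affine _ 0 = _
  rw [affine_layerOut]
  exact statePost_eq (s := (⟨0, by omega⟩ : Fin (d + 2))) rfl

-- structural lemmas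

lemma depth_chainAux (c₀ i : ℕ) (hi : i < d) (sh : ℝ) :
    ∀ n, (chainAux d A ε c₀ i hi sh n).depth = 3 * (n + 1) := by
  intro n
  induction n with
  | zero => rfl
  | succ n IH =>
    show (append _ _).depth = _
    rw [depth_append, IH]
    show 3 + 3 * (n + 1) = _
    omega

lemma depth_coordChain (c₀ : ℕ) (hc₀ : 0 < c₀) (shv : ℝ) :
    ∀ i, ∀ hi : i < d, (coordChain d A ε c₀ shv i hi).depth = 3 * c₀ * (i + 1) := by
  intro i
  induction i with
  | zero =>
    intro hi
    show (chainAux d A ε c₀ 0 hi 1 (c₀ - 1)).depth = _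
    rw [depth_chainAux]
    omega
  | succ i IH =>
    intro hi
    show (append _ _).depth = _
    rw [depth_append, depth_chainAux, IH]
    have : c₀ - 1 + 1 = c₀ := by omega
    rw [this]
    ring

lemma depth_fullNet (c₀ : ℕ) (hc₀ : 0 < c₀) (shv : ℝ) (hd : 0 < d) :
    (fullNet d A ε c₀ shv hd).depth = 3 * c₀ * d + 2 := by
  show (append _ _).depth + 1 = _
  rw [depth_append, depth_coordChain c₀ hc₀]
  show 3 * c₀ * (d - 1 + 1) + 1 + 1 = _
  have : d - 1 + 1 = d := by omega
  rw [this]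

lemma width_chainAux (c₀ i : ℕ) (hi : i < d) (sh : ℝ) :
    ∀ n, (chainAux d A ε c₀ i hi sh n).width = d + 2 := by
  intro n
  induction n with
  | zero => simp [chainAux, bitBlockLast, Net.width]
  | succ n IH =>
    show (append _ _).width = _
    rw [width_append, IH]
    simp [bitBlockMid, Net.width]

lemma width_coordChain (c₀ : ℕ) (shv : ℝ) :
    ∀ i, ∀ hi : i < d, (coordChain d A ε c₀ shv i hi).width = d + 2 := by
  intro i
  induction i with
  | zero => intro hi; exact width_chainAux c₀ 0 hi 1 (c₀ - 1)
  | succ i IH =>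
    intro hi
    show (append _ _).width = _
    rw [width_append, width_chainAux, IH]
    simp

lemma width_fullNet (c₀ : ℕ) (shv : ℝ) (hd : 0 < d) :
    (fullNet d A ε c₀ shv hd).width = d + 2 := by
  show max d (append _ _).width = _
  rw [width_append, width_coordChain, show (Net.last (layerOut d)).width = d + 2 from rfl]
  omega

end Coords
end BitNet

namespace BitNet
section Weights
variable {d : ℕ} {A ε : ℝ} (R : ℝ)

def Ic (R : ℝ) : Set ℝ := Set.Icc (-R) R

lemma memIc {R w : ℝ} (h : |w| ≤ R) : w ∈ Ic R := Set.mem_Icc.mpr (abs_le.mp h)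

lemma zero_memIc {R : ℝ} (hR : 0 ≤ R) : (0:ℝ) ∈ Ic R := memIc (by simpa using hR)

lemma eRow_mem {n : ℕ} {s : Set ℝ} (a : Fin n) {w : ℝ} (hw : w ∈ s) (h0 : (0:ℝ) ∈ s) :
    ∀ j, eRow a w j ∈ s := by
  intro j; unfold eRow; split_ifs <;> assumption

lemma eRow2_mem {n : ℕ} {s : Set ℝ} (a b : Fin n) {w v : ℝ} (hw : w ∈ s) (hv : v ∈ s)
    (h0 : (0:ℝ) ∈ s) : ∀ j, eRow2 a b w v j ∈ s := by
  intro j; unfold eRow2; split_ifs <;> assumption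

structure Bounds (R A ε sh : ℝ) : Prop where
  hR : 0 ≤ R
  h1 : (1:ℝ) ≤ R
  h2 : (2:ℝ) ≤ R
  hA : A ∈ Ic R
  hAe : -(A / ε) ∈ Ic R
  hTA : ∀ T : ℝ, 0 ≤ T → T ≤ A → (-T ∈ Ic R ∧ T / A ∈ Ic R)
  h2sh : 2 * sh ∈ Ic R
  hnsh : -sh ∈ Ic R
  hshA : sh * A ∈ Ic R

variable {R}

lemma layer1_ok {sh : ℝ} (B : Bounds R A ε sh) (i : ℕ) (hi : i < d) {T : ℝ}
    (hT0 : 0 ≤ T) (hTA : T ≤ A) :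
    (∀ p q, (layer1 d i hi T).W p q ∈ Ic R) ∧ (∀ p, (layer1 d i hi T).b p ∈ Ic R) := by
  have h0 : (0:ℝ) ∈ Ic R := zero_memIc B.hR
  have h1 : (1:ℝ) ∈ Ic R := memIc (by rw [abs_one]; exact B.h1)
  constructor
  · intro p q
    simp only [layer1]
    split_ifs <;> first | exact eRow_mem _ h1 h0 q | exact h0
  · intro p
    simp only [layer1]
    split_ifs
    · exact (B.hTA T hT0 hTA).1
    · exact h0

lemma layer2_ok {sh : ℝ} (B : Bounds R A ε sh) (i : ℕ) (hi : i < d) :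
    (∀ p q, (layer2 d A ε i hi).W p q ∈ Ic R) ∧ (∀ p, (layer2 d A ε i hi).b p ∈ Ic R) := by
  have h0 : (0:ℝ) ∈ Ic R := zero_memIc B.hR
  have h1 : (1:ℝ) ∈ Ic R := memIc (by rw [abs_one]; exact B.h1)
  constructor
  · intro p q
    simp only [layer2]
    split_ifs <;>
      first | exact eRow_mem _ h1 h0 q | exact eRow_mem _ B.hAe h0 q | exact h0
  · intro p
    simp only [layer2]
    split_ifs
    · exact B.hA
    · exact h0

lemma layer3mid_ok {sh : ℝ} (B : Bounds R A ε sh) (i : ℕ) (hi : i < d) {T : ℝ}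
    (hT0 : 0 ≤ T) (hTA : T ≤ A) :
    (∀ p q, (layer3mid d A i hi T).W p q ∈ Ic R)
      ∧ (∀ p, (layer3mid d A i hi T).b p ∈ Ic R) := by
  have h0 : (0:ℝ) ∈ Ic R := zero_memIc B.hR
  have h1 : (1:ℝ) ∈ Ic R := memIc (by rw [abs_one]; exact B.h1)
  have h2 : (2:ℝ) ∈ Ic R := memIc (by rw [abs_two]; exact B.h2)
  have hm1 : (-1:ℝ) ∈ Ic R := memIc (by rw [abs_neg, abs_one]; exact B.h1)
  constructor
  · intro p q
    simp only [layer3mid]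
    split_ifs
    · exact eRow_mem _ h1 h0 q
    · exact eRow2_mem _ _ h1 (B.hTA T hT0 hTA).2 h0 q
    · exact eRow2_mem _ _ h2 hm1 h0 q
    · exact h0
  · intro p
    simp only [layer3mid]
    split_ifs
    · exact (B.hTA T hT0 hTA).1
    · exact B.hA
    · exact h0

lemma layer3last_ok {sh : ℝ} (B : Bounds R A ε sh) (i : ℕ) (hi : i < d) :
    (∀ p q, (layer3last d A i hi sh).W p q ∈ Ic R)
      ∧ (∀ p, (layer3last d A i hi sh).b p ∈ Ic R) := by
  have h0 : (0:ℝ) ∈ Ic R := zero_memIc B.hR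
  have h1 : (1:ℝ) ∈ Ic R := memIc (by rw [abs_one]; exact B.h1)
  constructor
  · intro p q
    simp only [layer3last]
    split_ifs
    · exact eRow_mem _ h1 h0 q
    · exact eRow2_mem _ _ B.h2sh B.hnsh h0 q
    · exact h0
  · intro p
    simp only [layer3last]
    split_ifs
    · exact B.hshA
    · exact h0

lemma layer0_ok (hR : 0 ≤ R) (h1 : (1:ℝ) ≤ R) :
    (∀ p q, (layer0 d).W p q ∈ Ic R) ∧ (∀ p, (layer0 d).b p ∈ Ic R) := by
  have h0 : (0:ℝ) ∈ Ic R := zero_memIc hR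
  have h1' : (1:ℝ) ∈ Ic R := memIc (by rw [abs_one]; exact h1)
  constructor
  · intro p q
    simp only [layer0]
    split_ifs
    · exact eRow_mem _ h1' h0 q
    · exact h0
  · intro p
    exact h0

lemma layerOut_ok (hR : 0 ≤ R) (h1 : (1:ℝ) ≤ R) :
    (∀ p q, (layerOut d).W p q ∈ Ic R) ∧ (∀ p, (layerOut d).b p ∈ Ic R) := by
  have h0 : (0:ℝ) ∈ Ic R := zero_memIc hR
  have h1' : (1:ℝ) ∈ Ic R := memIc (by rw [abs_one]; exact h1)
  exact ⟨fun p q => eRow_mem _ h1' h0 q, fun p => h0⟩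

lemma weights_chainAux {sh : ℝ} (B : Bounds R A ε sh) (c₀ i : ℕ) (hi : i < d)
    (hA0 : 0 < A) :
    ∀ n, (chainAux d A ε c₀ i hi sh n).weightsIn (Ic R) := by
  have hTok : ∀ m : ℕ, 0 ≤ A / 2 ^ m ∧ A / 2 ^ m ≤ A := by
    intro m
    have h2m : (1:ℝ) ≤ 2 ^ m := one_le_pow₀ one_le_two
    constructor
    · positivity
    · rw [div_le_iff₀ (by positivity)]
      nlinarith
  intro n
  induction n with
  | zero =>
    exact ⟨layer1_ok B i hi (hTok c₀).1 (hTok c₀).2,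
      layer2_ok B i hi, layer3last_ok B i hi⟩
  | succ n IH =>
    exact weightsIn_append _ _
      ⟨layer1_ok B i hi (hTok _).1 (hTok _).2,
        layer2_ok B i hi, layer3mid_ok B i hi (hTok _).1 (hTok _).2⟩ IH

lemma weights_coordChain {sh : ℝ} (B : Bounds R A ε sh) (B1 : Bounds R A ε 1)
    (c₀ : ℕ) (hA0 : 0 < A) :
    ∀ i, ∀ hi : i < d, (coordChain d A ε c₀ sh i hi).weightsIn (Ic R) := by
  intro i
  induction i with
  | zero => intro hi; exact weights_chainAux B1 c₀ 0 hi hA0 (c₀ - 1)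
  | succ i IH =>
    intro hi
    exact weightsIn_append _ _ (weights_chainAux B c₀ (i + 1) hi hA0 (c₀ - 1)) (IH _)

lemma weights_fullNet {sh : ℝ} (B : Bounds R A ε sh) (B1 : Bounds R A ε 1)
    (c₀ : ℕ) (hA0 : 0 < A) (hd : 0 < d) :
    (fullNet d A ε c₀ sh hd).weightsIn (Ic R) := by
  refine ⟨layer0_ok B.hR B.h1, ?_⟩
  exact weightsIn_append _ _ (weights_coordChain B B1 c₀ hA0 (d - 1) _)
    (layerOut_ok B.hR B.h1)

end Weights
end BitNet

namespace BitNet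
section Arith

/-- natural-number mirror of the accumulator -/
def accN (An c₀ shn : ℕ) (kf : ℕ → ℕ) : ℕ → ℕ → ℕ
  | 0, a => 2 ^ c₀ * a + An * kf 0
  | i + 1, a => accN An c₀ shn kf i (shn * (2 ^ c₀ * a + An * kf (i + 1)))

lemma accN_cast (An c₀ shn : ℕ) (kf : ℕ → ℕ) :
    ∀ i a, ((accN An c₀ shn kf i a : ℕ) : ℝ) = acc (An : ℝ) c₀ (shn : ℝ) kf i (a : ℝ) := by
  intro i
  induction i with
  | zero =>
    intro a
    show ((2 ^ c₀ * a + An * kf 0 : ℕ) : ℝ) = _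
    simp only [acc]
    push_cast
    ring
  | succ i IH =>
    intro a
    show ((accN An c₀ shn kf i (shn * (2 ^ c₀ * a + An * kf (i + 1))) : ℕ) : ℝ) = _
    rw [IH]
    show _ = acc (An : ℝ) c₀ (shn : ℝ) kf i ((shn:ℝ) * (2 ^ c₀ * (a:ℝ) + An * kf (i + 1)))
    congr 1
    push_cast
    ring

lemma accN_affine (An c₀ shn : ℕ) (kf : ℕ → ℕ) :
    ∀ i a, accN An c₀ shn kf i a
      = accN An c₀ shn kf i 0 + a * (2 ^ c₀ * (2 ^ c₀ * shn) ^ i) := by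
  intro i
  induction i with
  | zero =>
    intro a
    show 2 ^ c₀ * a + An * kf 0 = (2 ^ c₀ * 0 + An * kf 0) + a * (2 ^ c₀ * (2 ^ c₀ * shn) ^ 0)
    ring
  | succ i IH =>
    intro a
    show accN An c₀ shn kf i (shn * (2 ^ c₀ * a + An * kf (i + 1)))
      = accN An c₀ shn kf i (shn * (2 ^ c₀ * 0 + An * kf (i + 1)))
        + a * (2 ^ c₀ * (2 ^ c₀ * shn) ^ (i + 1))
    rw [IH (shn * (2 ^ c₀ * a + An * kf (i + 1))), IH (shn * (2 ^ c₀ * 0 + An * kf (i + 1)))]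
    ring

lemma accN_sum (An c₀ c : ℕ) (hcc : c₀ ≤ c) (kf : ℕ → ℕ) :
    ∀ i, accN An c₀ (2 ^ (c - c₀)) kf i 0
      = ∑ l ∈ Finset.range (i + 1), (An * kf l) * 2 ^ (l * c) := by
  intro i
  induction i with
  | zero =>
    show 2 ^ c₀ * 0 + An * kf 0 = _
    rw [Finset.sum_range_one]
    simp
  | succ i IH =>
    show accN An c₀ (2 ^ (c - c₀)) kf i (2 ^ (c - c₀) * (2 ^ c₀ * 0 + An * kf (i + 1))) = _
    rw [accN_affine, IH, Finset.sum_range_succ _ (i + 1)]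
    congr 1
    have e : (2:ℕ) ^ ((i + 1) * c) = 2 ^ (c - c₀) * (2 ^ c₀ * (2 ^ c₀ * 2 ^ (c - c₀)) ^ i) := by
      have e2 : (2:ℕ) ^ c₀ * 2 ^ (c - c₀) = 2 ^ c := by
        rw [← pow_add]; congr 1; omega
      rw [e2, ← pow_mul, ← pow_add, ← pow_add]
      congr 1
      rw [← add_assoc, Nat.sub_add_cancel hcc]
      ring
    rw [e]
    ring

lemma sum_div_mod (c : ℕ) (hc : 0 < c) :
    ∀ i (f : ℕ → ℕ) (m : ℕ), i < m → (∀ l, f l < 2 ^ c) →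
      (∑ l ∈ Finset.range m, f l * 2 ^ (l * c)) / 2 ^ (i * c) % 2 ^ c = f i := by
  intro i
  induction i with
  | zero =>
    intro f m him hf
    obtain ⟨m', rfl⟩ : ∃ m', m = m' + 1 := ⟨m - 1, by omega⟩
    rw [Finset.sum_range_succ']
    have e : ∀ l, f (l + 1) * 2 ^ ((l + 1) * c) = (f (l + 1) * 2 ^ (l * c)) * 2 ^ c := by
      intro l
      rw [mul_assoc, ← pow_add]
      congr 2
      ring
    rw [Finset.sum_congr rfl (fun l _ => e l), ← Finset.sum_mul]
    rw [zero_mul, pow_zero, Nat.div_one, mul_one, add_comm, Nat.add_mul_mod_self_right]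
    exact Nat.mod_eq_of_lt (hf 0)
  | succ i IH =>
    intro f m him hf
    obtain ⟨m', rfl⟩ : ∃ m', m = m' + 1 := ⟨m - 1, by omega⟩
    rw [Finset.sum_range_succ']
    have e : ∀ l, f (l + 1) * 2 ^ ((l + 1) * c) = (f (l + 1) * 2 ^ (l * c)) * 2 ^ c := by
      intro l
      rw [mul_assoc, ← pow_add]
      congr 2
      ring
    rw [Finset.sum_congr rfl (fun l _ => e l), ← Finset.sum_mul]
    rw [zero_mul, pow_zero, mul_one]
    have e2 : (2:ℕ) ^ ((i + 1) * c) = 2 ^ c * 2 ^ (i * c) := by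
      rw [← pow_add]; congr 1; ring
    rw [e2, ← Nat.div_div_eq_div_mul]
    have e3 : ((∑ l ∈ Finset.range m', f (l + 1) * 2 ^ (l * c)) * 2 ^ c + f 0) / 2 ^ c
        = ∑ l ∈ Finset.range m', f (l + 1) * 2 ^ (l * c) := by
      rw [add_comm, Nat.add_mul_div_right _ _ (by positivity : 0 < 2 ^ c),
        Nat.div_eq_of_lt (hf 0), zero_add]
    rw [e3]
    exact IH (fun l => f (l + 1)) m' (by omega) (fun l => hf (l + 1))

end Arith
end BitNet

namespace BitNet

lemma BIN_eq (c i m : ℕ) (hc : 0 < c) :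
    BIN (i * c + 1) ((i + 1) * c) m = m / 2 ^ (i * c) % 2 ^ c := by
  have h : (i + 1) * c = i * c + c := by ring
  rw [h]
  unfold BIN
  congr 2 <;> omega

lemma floor_eq_k (A : ℝ) (hA : 0 < A) (c₀ k : ℕ) (x ε : ℝ) (hε : 0 < ε)
    (hlo : (k : ℝ) * (A / 2 ^ c₀) + ε ≤ x) (hhi : x < ((k : ℝ) + 1) * (A / 2 ^ c₀)) :
    ⌊x / A * 2 ^ c₀⌋ = (k : ℤ) := by
  have hh : (0:ℝ) < A / 2 ^ c₀ := by positivity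
  have e : x / A * 2 ^ c₀ = x / (A / 2 ^ c₀) := by
    field_simp
  rw [e, Int.floor_eq_iff]
  constructor
  · rw [le_div_iff₀ hh]
    push_cast
    nlinarith
  · rw [div_lt_iff₀ hh]
    push_cast
    linarith

end BitNet


end

open BitNet MeasureTheory in
set_option maxHeartbeats 2000000 in
theorem stmt10 :
    ∃ c₁ c₂ : ℝ, 0 < c₁ ∧ 0 < c₂ ∧
    ∀ (c c₀ A d : ℕ), 0 < c → 0 < c₀ → 0 < A → 0 < d →
      (c : ℝ) ≥ (c₀ : ℝ) + Real.logb 2 (A : ℝ) + 1 →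
    ∀ δ : ℝ, 0 < δ →
    ∃ N : Net d 1,
      N.width ≤ d + 2 ∧
      (N.depth : ℝ) ≤ c₁ * (c₀ : ℝ)^2 * d ∧
      N.weightsIn (Set.Icc (-(c₂ * 2^c * (A : ℝ) * d / δ)) (c₂ * 2^c * (A : ℝ) * d / δ)) ∧
      ENNReal.ofReal ((1 - δ) * (A : ℝ)^d) ≤
        MeasureTheory.volume {x : Fin d → ℝ |
          (∀ i, x i ∈ Set.Icc (0 : ℝ) (A : ℝ)) ∧
          ∃ m : ℕ, N.eval x 0 = (m : ℝ) ∧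
            ∀ i : Fin d,
              (BIN ((i : ℕ) * c + 1) (((i : ℕ) + 1) * c) m : ℝ) =
                (⌊x i / (A : ℝ) * 2^c₀⌋ : ℤ) * (A : ℝ)} := by
  classical
  refine ⟨6, 4, by norm_num, by norm_num, ?_⟩
  intro c c₀ A d hc hc₀ hA hd hlog δ hδ
  have hd1 : (1:ℝ) ≤ d := by exact_mod_cast hd
  have hA1 : (1:ℝ) ≤ A := by exact_mod_cast hA
  have hA0 : (0:ℝ) < A := by linarith
  have hc₀1 : (1:ℝ) ≤ c₀ := by exact_mod_cast hc₀
  by_cases hδ1 : 1 ≤ δ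
  · -- trivial case: the zero network works
    refine ⟨.last ⟨0, 0⟩, ?_, ?_, ?_, ?_⟩
    · show d ≤ d + 2
      omega
    · show ((1:ℕ):ℝ) ≤ _
      push_cast
      nlinarith
    · have hB : 0 ≤ 4 * (2:ℝ)^c * A * d / δ := by positivity
      have h0B : (0:ℝ) ∈ Set.Icc (-(4 * (2:ℝ)^c * A * d / δ)) (4 * (2:ℝ)^c * A * d / δ) :=
        Set.mem_Icc.mpr ⟨by linarith, hB⟩
      exact ⟨fun i j => h0B, fun i => h0B⟩
    · have hz : ENNReal.ofReal ((1 - δ) * (A:ℝ)^d) = 0 := by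
        apply ENNReal.ofReal_of_nonpos
        have h1 : (0:ℝ) ≤ (A:ℝ)^d := by positivity
        nlinarith
      rw [hz]
      exact zero_le
  · push_neg at hδ1
    have hkey : (A:ℝ) * 2 ^ c₀ * 2 ≤ 2 ^ c := by
      have h1 : ((2:ℝ)) ^ ((c₀:ℝ) + Real.logb 2 (A:ℝ) + 1) ≤ (2:ℝ) ^ ((c:ℝ)) :=
        Real.rpow_le_rpow_of_exponent_le one_le_two hlog
      have h2 : ((2:ℝ)) ^ ((c₀:ℝ) + Real.logb 2 (A:ℝ) + 1)
          = 2 ^ (c₀:ℕ) * (A:ℝ) * 2 := by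
        rw [Real.rpow_add two_pos, Real.rpow_add two_pos,
          Real.rpow_logb two_pos (by norm_num) hA0, Real.rpow_one,
          Real.rpow_natCast]
      have h3 : ((2:ℝ)) ^ ((c:ℝ)) = 2 ^ (c:ℕ) := Real.rpow_natCast 2 c
      rw [h2, h3] at h1
      linarith
    have hc₀c : c₀ < c := by
      have hlb : Real.logb 2 (A:ℝ) ≥ 0 := Real.logb_nonneg one_lt_two hA1
      have h4 : (c₀:ℝ) + 1 ≤ c := by linarith
      exact_mod_cast h4
    have h2c1 : (1:ℝ) ≤ 2^c := one_le_pow₀ one_le_two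
    have h2c₀1 : (1:ℝ) ≤ 2^c₀ := one_le_pow₀ one_le_two
    set ε : ℝ := δ * A / (d * 2 ^ c₀) with hεdef
    have hε : 0 < ε := by positivity
    set hh : ℝ := (A:ℝ) / 2 ^ c₀ with hhhdef
    have hhh : 0 < hh := by positivity
    have hεhh : ε = (δ / d) * hh := by
      rw [hεdef, hhhdef]
      field_simp
    have hδd : δ / (d:ℝ) < 1 := by
      rw [div_lt_one (by positivity)]
      linarith
    have hεlt : ε < hh := by
      rw [hεhh]
      nlinarith [div_nonneg hδ.le (by positivity : (0:ℝ) ≤ d)]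
    set shv : ℝ := ((2 ^ (c - c₀) : ℕ) : ℝ) with hshvdef
    have hshv : shv = (2:ℝ) ^ (c - c₀) := by rw [hshvdef]; push_cast; rfl
    have hshv0 : 0 ≤ shv := by rw [hshv]; positivity
    set R : ℝ := 4 * 2 ^ c * (A:ℝ) * d / δ with hRdef
    have hRalt : R = 4 * 2 ^ c * (A:ℝ) * ((d:ℝ)/δ) := by rw [hRdef]; ring
    have hdδ : (1:ℝ) ≤ (d:ℝ)/δ := by
      rw [le_div_iff₀ hδ]
      nlinarith
    have hR4 : 4 * 2^c * (A:ℝ) ≤ R := by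
      rw [hRalt]
      have := mul_le_mul_of_nonneg_left hdδ (by positivity : (0:ℝ) ≤ 4 * 2^c * (A:ℝ))
      linarith [this]
    have hRpos : (0:ℝ) < R := by rw [hRdef]; positivity
    have h2cA : (1:ℝ) ≤ 2^c * A := by
      have := mul_le_mul h2c1 hA1 (by norm_num) (by positivity : (0:ℝ) ≤ 2^c)
      linarith
    have h4R : (4:ℝ) ≤ R := by linarith [hR4, h2cA]
    have h1R : (1:ℝ) ≤ R := by linarith
    have h2cR : (2:ℝ)^c ≤ R := by
      have := mul_le_mul_of_nonneg_left hA1 (by positivity : (0:ℝ) ≤ (2:ℝ)^c)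
      linarith [hR4]
    have hAR : (A:ℝ) ≤ R := by
      have := mul_le_mul_of_nonneg_left h2c1 hA0.le
      linarith [hR4]
    have hAeR : (A:ℝ)/ε ≤ R := by
      have e1 : (A:ℝ)/ε = (d:ℝ) * 2^c₀ / δ := by
        rw [hεdef]
        field_simp
      rw [e1, hRdef]
      apply (div_le_div_iff_of_pos_right hδ).mpr
      have u0 : (0:ℝ) ≤ (d:ℝ) := by positivity
      have u1 : (2:ℝ)^c₀ ≤ (A:ℝ) * 2^c₀ * 2 := by
        nlinarith [mul_nonneg (by linarith : (0:ℝ) ≤ (A:ℝ) - 1)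
          (by positivity : (0:ℝ) ≤ (2:ℝ)^c₀)]
      have u2 : (2:ℝ)^c₀ ≤ 2^c := by linarith [hkey]
      have u3 := mul_le_mul_of_nonneg_left hA1 (by positivity : (0:ℝ) ≤ (2:ℝ)^c)
      have u4 : (2:ℝ)^c₀ ≤ 4 * 2^c * (A:ℝ) := by linarith
      have u5 := mul_le_mul_of_nonneg_left u4 u0
      linarith [u5]
    have hB : Bounds R (A:ℝ) ε shv := by
      refine ⟨hRpos.le, h1R, by linarith, memIc ?_, memIc ?_, ?_, memIc ?_,
        memIc ?_, memIc ?_⟩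
      · rw [abs_of_nonneg hA0.le]; exact hAR
      · rw [abs_neg, abs_of_nonneg (by positivity)]; exact hAeR
      · intro T hT0 hTA
        constructor
        · apply memIc
          rw [abs_neg, abs_of_nonneg hT0]
          linarith
        · apply memIc
          rw [abs_of_nonneg (by positivity)]
          have : T / (A:ℝ) ≤ 1 := by
            rw [div_le_one hA0]; linarith
          linarith
      · rw [abs_of_nonneg (by positivity), hshv]
        have e2 : 2 * (2:ℝ)^(c - c₀) = 2^(c - c₀ + 1) := by rw [pow_succ]; ring
        rw [e2]
        calc (2:ℝ)^(c - c₀ + 1) ≤ 2^c := by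
              apply pow_le_pow_right₀ one_le_two
              omega
          _ ≤ R := h2cR
      · rw [abs_neg, abs_of_nonneg hshv0, hshv]
        calc (2:ℝ)^(c - c₀) ≤ 2^c := by
              apply pow_le_pow_right₀ one_le_two
              omega
          _ ≤ R := h2cR
      · rw [abs_of_nonneg (by positivity), hshv]
        have e3 : (2:ℝ)^(c - c₀) ≤ 2^c := by
          apply pow_le_pow_right₀ one_le_two
          omega
        have e4 := mul_le_mul_of_nonneg_right e3 hA0.le
        have e5 : (0:ℝ) ≤ 2^c * A := by positivity
        linarith [hR4]
    have hB1 : Bounds R (A:ℝ) ε 1 := by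
      refine ⟨hRpos.le, h1R, by linarith, memIc ?_, memIc ?_, ?_, memIc ?_,
        memIc ?_, memIc ?_⟩
      · rw [abs_of_nonneg hA0.le]; exact hAR
      · rw [abs_neg, abs_of_nonneg (by positivity)]; exact hAeR
      · intro T hT0 hTA
        constructor
        · apply memIc
          rw [abs_neg, abs_of_nonneg hT0]
          linarith
        · apply memIc
          rw [abs_of_nonneg (by positivity)]
          have : T / (A:ℝ) ≤ 1 := by
            rw [div_le_one hA0]; linarith
          linarith
      · rw [mul_one, abs_two]; linarith
      · rw [abs_neg, abs_one]; linarith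
      · rw [one_mul, abs_of_nonneg hA0.le]; exact hAR
    refine ⟨fullNet d (A:ℝ) ε c₀ shv hd, ?_, ?_, ?_, ?_⟩
    · exact le_of_eq (width_fullNet c₀ shv hd)
    · rw [depth_fullNet c₀ hc₀ shv hd]
      push_cast
      have hcd : (1:ℝ) ≤ (c₀:ℝ) * (d:ℝ) := by
        nlinarith [mul_nonneg (sub_nonneg.mpr hc₀1) (sub_nonneg.mpr hd1)]
      nlinarith [mul_nonneg (mul_nonneg (sub_nonneg.mpr hc₀1)
          (by positivity : (0:ℝ) ≤ (c₀:ℝ))) (by positivity : (0:ℝ) ≤ (d:ℝ)),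
        mul_le_mul_of_nonneg_left hcd (by positivity : (0:ℝ) ≤ (c₀:ℝ))]
    · exact weights_fullNet hB hB1 c₀ hA0 hd
    · -- the measure estimate
      set S : Set ℝ :=
        ⋃ k ∈ Finset.range (2 ^ c₀), Set.Ico ((k:ℝ) * hh + ε) ((k:ℝ) * hh + hh) with hSdef
      have hdisj : (↑(Finset.range (2 ^ c₀)) : Set ℕ).PairwiseDisjoint
          (fun k : ℕ => Set.Ico ((k:ℝ) * hh + ε) ((k:ℝ) * hh + hh)) := by
        intro a _ b _ hab
        have hgoal : Disjoint (Set.Ico ((a:ℝ) * hh + ε) ((a:ℝ) * hh + hh))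
            (Set.Ico ((b:ℝ) * hh + ε) ((b:ℝ) * hh + hh)) := by
          rw [Set.Ico_disjoint_Ico]
          rcases Nat.lt_or_ge a b with hlt | hge
          · have hcast : (a:ℝ) + 1 ≤ b := by exact_mod_cast hlt
            calc min ((a:ℝ)*hh + hh) ((b:ℝ)*hh + hh) ≤ (a:ℝ)*hh + hh := min_le_left _ _
              _ ≤ (b:ℝ)*hh + ε := by nlinarith
              _ ≤ max ((a:ℝ)*hh + ε) ((b:ℝ)*hh + ε) := le_max_right _ _
          · have hblt : b < a := by omega
            have hcast : (b:ℝ) + 1 ≤ a := by exact_mod_cast hblt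
            calc min ((a:ℝ)*hh + hh) ((b:ℝ)*hh + hh) ≤ (b:ℝ)*hh + hh := min_le_right _ _
              _ ≤ (a:ℝ)*hh + ε := by nlinarith
              _ ≤ max ((a:ℝ)*hh + ε) ((b:ℝ)*hh + ε) := le_max_left _ _
        exact hgoal
      have hSvol : volume S = ((2^c₀ : ℕ) : ENNReal) * ENNReal.ofReal (hh - ε) := by
        rw [hSdef, measure_biUnion_finset hdisj (fun k _ => measurableSet_Ico)]
        have e : ∀ k : ℕ, volume (Set.Ico ((k:ℝ)*hh + ε) ((k:ℝ)*hh + hh))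
            = ENNReal.ofReal (hh - ε) := by
          intro k
          rw [Real.volume_Ico]
          congr 1
          ring
        rw [Finset.sum_congr rfl (fun k _ => e k), Finset.sum_const, Finset.card_range,
          nsmul_eq_mul]
      have hsub : (Set.univ.pi fun _ : Fin d => S) ⊆ {x : Fin d → ℝ |
          (∀ i, x i ∈ Set.Icc (0 : ℝ) (A : ℝ)) ∧
          ∃ m : ℕ, (fullNet d (A:ℝ) ε c₀ shv hd).eval x 0 = (m : ℝ) ∧
            ∀ i : Fin d,
              (BIN ((i : ℕ) * c + 1) (((i : ℕ) + 1) * c) m : ℝ) =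
                (⌊x i / (A : ℝ) * 2^c₀⌋ : ℤ) * (A : ℝ)} := by
        intro x hx
        rw [Set.mem_pi] at hx
        have hchoice : ∀ i : Fin d, ∃ k : ℕ, k < 2^c₀ ∧
            ((k:ℝ)*hh + ε ≤ x i ∧ x i < (k:ℝ)*hh + hh) := by
          intro i
          have hxi := hx i (Set.mem_univ i)
          rw [hSdef] at hxi
          simp only [Set.mem_iUnion, Finset.mem_range, Set.mem_Ico] at hxi
          obtain ⟨k, hk1, hk2⟩ := hxi
          exact ⟨k, hk1, hk2⟩
        choose kfin hfk hflo hfhi using hchoice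
        set kf : ℕ → ℕ := fun l => if h : l < d then kfin ⟨l, h⟩ else 0 with hkfdef
        set xe : ℕ → ℝ := fun l => if h : l < d then x ⟨l, h⟩ else 0 with hxedef
        have hkff : ∀ k : Fin d, kf (k:ℕ) = kfin k := by
          intro k
          rw [hkfdef]
          simp only []
          rw [dif_pos k.isLt]
        have hxef : ∀ k : Fin d, xe (k:ℕ) = x k := by
          intro k
          rw [hxedef]
          simp only []
          rw [dif_pos k.isLt]
        have hxe : ∀ m, 0 ≤ xe m := by
          intro m
          rw [hxedef]
          simp only []
          by_cases h : m < d
          · rw [dif_pos h]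
            have h1 := hflo ⟨m, h⟩
            have h2 : (0:ℝ) ≤ (kfin ⟨m, h⟩ : ℝ) * hh := by positivity
            linarith
          · rw [dif_neg h]
        have hkb : ∀ l, l ≤ d - 1 → kf l < 2^c₀ := by
          intro l hl
          have hld : l < d := by omega
          rw [hkfdef]
          simp only []
          rw [dif_pos hld]
          exact hfk _
        have hlob : ∀ l, l ≤ d - 1 → (kf l : ℝ) * ((A:ℝ)/2^c₀) + ε ≤ xe l := by
          intro l hl
          have hld : l < d := by omega
          rw [hkfdef, hxedef]
          simp only []
          rw [dif_pos hld, dif_pos hld, ← hhhdef]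
          exact hflo ⟨l, hld⟩
        have hhib : ∀ l, l ≤ d - 1 → xe l < ((kf l : ℝ) + 1) * ((A:ℝ)/2^c₀) := by
          intro l hl
          have hld : l < d := by omega
          rw [hkfdef, hxedef]
          simp only []
          rw [dif_pos hld, dif_pos hld, ← hhhdef]
          have h1 := hfhi ⟨l, hld⟩
          nlinarith [h1]
        constructor
        · intro i
          have h1 := hflo i
          have h2 := hfhi i
          have h3 := hfk i
          constructor
          · have h4 : (0:ℝ) ≤ (kfin i : ℝ) * hh := by positivity
            linarith
          · have hkc : (kfin i : ℝ) + 1 ≤ ((2:ℝ))^c₀ := by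
              exact_mod_cast Nat.succ_le_of_lt h3
            have hA3 : (2:ℝ)^c₀ * hh = A := by
              rw [hhhdef]
              field_simp
            nlinarith [hhh.le]
        · refine ⟨accN A c₀ (2^(c-c₀)) kf (d-1) 0, ?_, ?_⟩
          · rw [eval_fullNet c₀ hc₀ shv hd x xe hxef kf hxe hA0 hε hshv0 hkb hlob hhib,
              accN_cast, hshvdef]
            norm_num
          · intro i
            have hkeyN : A * 2^c₀ * 2 ≤ 2^c := by exact_mod_cast hkey
            have hbound : ∀ l, A * kf l < 2^c := by
              intro l
              have h1 : kf l < 2^c₀ := by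
                rw [hkfdef]
                simp only []
                by_cases h : l < d
                · rw [dif_pos h]; exact hfk _
                · rw [dif_neg h]; positivity
              have h2 : A * (kf l + 1) ≤ A * 2^c₀ :=
                Nat.mul_le_mul_left A (Nat.succ_le_of_lt h1)
              have h3 : 1 ≤ A := hA
              nlinarith [h2, hkeyN]
            have hmval : accN A c₀ (2^(c-c₀)) kf (d-1) 0
                = ∑ l ∈ Finset.range d, (A * kf l) * 2^(l*c) := by
              rw [accN_sum A c₀ c (le_of_lt hc₀c) kf (d-1),
                show d - 1 + 1 = d from by omega]
            have hBINv : BIN ((i:ℕ) * c + 1) (((i:ℕ) + 1) * c)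
                (accN A c₀ (2^(c-c₀)) kf (d-1) 0) = A * kf (i:ℕ) := by
              rw [BIN_eq c (i:ℕ) _ hc, hmval]
              exact sum_div_mod c hc (i:ℕ) (fun l => A * kf l) d i.isLt hbound
            rw [hBINv]
            have hfl : ⌊x i / (A:ℝ) * 2^c₀⌋ = ((kf (i:ℕ)) : ℤ) := by
              rw [hkff i]
              apply floor_eq_k (A:ℝ) hA0 c₀ _ _ ε hε
              · rw [← hhhdef]
                exact hflo i
              · rw [← hhhdef]
                have h1 := hfhi i
                nlinarith [h1]
            rw [hfl]
            push_cast
            ring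
      have hnn : (0:ℝ) ≤ hh - ε := by linarith
      calc ENNReal.ofReal ((1 - δ) * (A:ℝ)^d)
          ≤ ENNReal.ofReal ((2^c₀ * (hh - ε))^d) := by
            apply ENNReal.ofReal_le_ofReal
            have e : (2:ℝ)^c₀ * (hh - ε) = A * (1 - δ/(d:ℝ)) := by
              rw [hεhh, hhhdef]
              field_simp
            rw [e, mul_pow]
            have hber : 1 - δ ≤ (1 - δ/(d:ℝ))^d := by
              have hq0 : (0:ℝ) < δ/(d:ℝ) := by positivity
              have h2 : (-2:ℝ) ≤ -(δ/(d:ℝ)) := by linarith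
              have hbb := one_add_mul_le_pow h2 d
              have e2 : 1 + (d:ℝ) * -(δ/(d:ℝ)) = 1 - δ := by
                field_simp
                ring
              rw [e2] at hbb
              calc 1 - δ ≤ (1 + -(δ/(d:ℝ)))^d := hbb
                _ = (1 - δ/(d:ℝ))^d := by ring_nf
            have hpow0 : (0:ℝ) ≤ (A:ℝ)^d := by positivity
            nlinarith [mul_le_mul_of_nonneg_right hber hpow0]
          _ = (ENNReal.ofReal (2^c₀ * (hh - ε)))^d := by
            rw [ENNReal.ofReal_pow (by positivity : (0:ℝ) ≤ 2^c₀ * (hh - ε))]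
          _ = (volume S)^d := by
            rw [hSvol]
            congr 1
            rw [← ENNReal.ofReal_natCast (2^c₀), ← ENNReal.ofReal_mul (by positivity)]
            congr 1
            push_cast
            ring
          _ = volume (Set.univ.pi fun _ : Fin d => S) := by
            rw [volume_pi_pi]
            rw [Finset.prod_const, Finset.card_univ, Fintype.card_fin]
          _ ≤ _ := measure_mono hsub
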